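/- arXiv:2210.16281 — 6 statements merged into one kernel-verified Lean document; each statement's English description precedes it below -/
import Mathlib

section
/- The number of terrain-like graphs on vertex set {1,2,3,4} is 56. -/
/-- A graph on vertex set `[n]` (vertices `Fin n` in increasing order) is terrain-like
if it satisfies the X-property. -/
def TerrainLike {n : ℕ} (G : SimpleGraph (Fin n)) : Prop :=
  ∀ a b c d : Fin n, a < b → b < c → c < d → G.Adj a c → G.Adj b d → G.Adj a d

/-- The order `⪯` on pairs `(a,b)` with `a < b`: `{a,b} ⪯ {c,d}` iff `c ≤ a < b ≤ d`. -/
def PairLE {n : ℕ} (e f : Fin n × Fin n) : Prop :=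
  f.1 ≤ e.1 ∧ e.2 ≤ f.2

/-- `τ({a,b})` is the transposition `(2a, 2b-1)` of `[2n]`; here vertices and the
elements of `[2n]` are 0-indexed, so it swaps the 0-based positions `2a+1` and `2b`. -/
def tau {n : ℕ} (e : Fin n × Fin n) : Equiv.Perm (Fin (2 * n)) :=
  Equiv.swap ⟨2 * e.1.val + 1, by have := e.1.isLt; omega⟩
    ⟨2 * e.2.val, by have := e.2.isLt; omega⟩

/-- `π₀ = (1,2)(3,4)⋯(2n-1,2n)` (0-indexed: swaps `2i` and `2i+1` for each `i < n`). -/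
def pi0 (n : ℕ) : Equiv.Perm (Fin (2 * n)) :=
  (List.ofFn (fun i : Fin n =>
    Equiv.swap ⟨2 * i.val, by have := i.isLt; omega⟩
      ⟨2 * i.val + 1, by have := i.isLt; omega⟩)).prod

/-- Dumont derangements of the second kind, on `Fin (2*n)` (0-indexed version of `[2n]`):
`π(2i-1) ≥ 2i-1`, `π(2i) < 2i` for `i ∈ [n]`, and `π(2i-1) > 2i-1` for `i ∈ [n-1]`. -/
def IsDumontDerangement {n : ℕ} (π : Equiv.Perm (Fin (2 * n))) : Prop :=
  (∀ i : Fin (2 * n), i.val % 2 = 0 → i.val ≤ (π i).val) ∧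
  (∀ i : Fin (2 * n), i.val % 2 = 1 → (π i).val < i.val) ∧
  (∀ i : Fin (2 * n), i.val % 2 = 0 → i.val < 2 * n - 2 → i.val < (π i).val)

/-- `i` and `j` are in edge configuration in `π` iff
`π⁻¹(i) < π⁻¹(j) ⟺ π⁻¹(i) ≡ π⁻¹(j) (mod 2)`. -/
def EdgeConfig {m : ℕ} (π : Equiv.Perm (Fin m)) (i j : Fin m) : Prop :=
  (π.symm i).val < (π.symm j).val ↔ (π.symm i).val % 2 = (π.symm j).val % 2

/-- A list `e₁ > ⋯ > e_m` of the edges of `G` (as pairs `(a,b)`, `a < b`), ordered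
descendingly with respect to a valid linear order (one extending `⪯`): no earlier
element is `⪯`-below a later one. -/
def ValidEdgeList {n : ℕ} (G : SimpleGraph (Fin n)) (l : List (Fin n × Fin n)) : Prop :=
  l.Nodup ∧ (∀ e : Fin n × Fin n, e ∈ l ↔ (e.1 < e.2 ∧ G.Adj e.1 e.2)) ∧
  l.Pairwise (fun e f => ¬ PairLE e f)

/-- `Π(G) = τ(e_m)⋯τ(e₁)π₀` for an edge list `[e₁,…,e_m]`. -/
def permOfList {n : ℕ} (l : List (Fin n × Fin n)) : Equiv.Perm (Fin (2 * n)) :=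
  (l.reverse.map tau).prod * pi0 n

def idx (a b : Fin 4) : Fin 6 :=
  match a.val, b.val with
  | 0, 1 => 0 | 0, 2 => 1 | 0, 3 => 2 | 1, 2 => 3 | 1, 3 => 4 | 2, 3 => 5
  | _, _ => 0

def adjFun (s : Fin 6 → Bool) (a b : Fin 4) : Bool :=
  if a < b then s (idx a b) else if b < a then s (idx b a) else false

def graphOf (s : Fin 6 → Bool) : SimpleGraph (Fin 4) :=
  SimpleGraph.mk' ⟨adjFun s, by
    intro a b
    rcases lt_trichotomy a b with h | h | h
    · simp [adjFun, h, asymm h]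
    · simp [adjFun, h]
    · simp [adjFun, h, asymm h], by
    intro a; simp [adjFun]⟩

lemma graphOf_bij : Function.Bijective graphOf := by
  constructor
  · intro s t h
    have h2 : adjFun s = adjFun t :=
      congrArg Subtype.val (SimpleGraph.mk'.injective h)
    funext i
    fin_cases i
    · simpa [adjFun, idx] using congr_fun₂ h2 0 1
    · simpa [adjFun, idx] using congr_fun₂ h2 0 2
    · simpa [adjFun, idx] using congr_fun₂ h2 0 3
    · simpa [adjFun, idx] using congr_fun₂ h2 1 2
    · simpa [adjFun, idx] using congr_fun₂ h2 1 3
    · simpa [adjFun, idx] using congr_fun₂ h2 2 3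
  · intro G
    classical
    refine ⟨fun i => decide (G.Adj (![0,0,0,1,1,2] i) (![1,2,3,2,3,3] i)), ?_⟩
    ext a b
    fin_cases a <;> fin_cases b <;>
      simp [graphOf, adjFun, idx, G.irrefl] <;>
      first
        | rfl
        | exact G.adj_comm _ _

instance : DecidablePred (fun s : Fin 6 → Bool => TerrainLike (graphOf s)) := fun s =>
  decidable_of_iff (∀ a b c d : Fin 4, a < b → b < c → c < d →
      adjFun s a c = true → adjFun s b d = true → adjFun s a d = true) (by
    constructor <;> intro h a b c d h1 h2 h3 h4 h5 <;>
      simpa [graphOf] using h a b c d h1 h2 h3 (by simpa [graphOf] using h4)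
        (by simpa [graphOf] using h5))

set_option maxRecDepth 100000 in
/-- There are exactly `H₄ = 56` terrain-like graphs on 4 vertices. -/
theorem card_terrainLike_four : Nat.card {G : SimpleGraph (Fin 4) // TerrainLike G} = 56 := by
  have e : {s : Fin 6 → Bool // TerrainLike (graphOf s)} ≃ {G : SimpleGraph (Fin 4) // TerrainLike G} :=
    (Equiv.ofBijective _ graphOf_bij).subtypeEquiv (fun s => Iff.rfl)
  rw [← Nat.card_congr e, Nat.card_eq_fintype_card]
  decide
end

section
/- The product Π(G) = τ(e_m)τ(e_{m-1})⋯τ(e_1)π_0 does not depend on the chosen valid linear ordering e_1 > ⋯ > e_m of the edge set E of a graph G on [n]. Here a linear ordering of E is valid if e ⪯ e' implies e ≤ e'. -/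
/-! Two valid orderings of the edges differ only in the relative order of `⪯`-incomparable
edges, and the transpositions of two incomparable edges have disjoint supports, hence commute.
So both products agree, as in a trace monoid: moving the first factor of one product to its
place in the other only passes it across factors that commute with it. -/

theorem List.Perm.prod_map_eq_of_pairwise {α M : Type*} [Monoid M] {g : α → M}
    {r : α → α → Prop} (hcomm : ∀ x y, r x y → r y x → Commute (g x) (g y))
    {l₁ l₂ : List α} (hperm : List.Perm l₁ l₂) (h₁ : l₁.Pairwise r) (h₂ : l₂.Pairwise r) :
    (l₁.map g).prod = (l₂.map g).prod := by
  induction l₁ generalizing l₂ with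
  | nil => rw [List.nil_perm.mp hperm]
  | cons a t ih =>
    obtain ⟨u, v, rfl⟩ := List.append_of_mem (hperm.subset List.mem_cons_self)
    have ht : List.Perm t (u ++ v) := (hperm.trans List.perm_middle).cons_inv
    have ha_comm : Commute (g a) (u.map g).prod := by
      refine Commute.list_prod_right _ _ fun _ hx => ?_
      obtain ⟨x, hxu, rfl⟩ := List.mem_map.mp hx
      exact hcomm a x (List.rel_of_pairwise_cons h₁ (ht.symm.subset (List.mem_append_left v hxu)))
        ((List.pairwise_append.mp h₂).2.2 x hxu a List.mem_cons_self)
    have h₂' : (u ++ v).Pairwise r := h₂.sublist ((List.sublist_cons_self a v).append_left u)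
    calc ((a :: t).map g).prod = g a * ((u ++ v).map g).prod := by
          rw [List.map_cons, List.prod_cons, ih ht h₁.of_cons h₂']
      _ = ((u ++ a :: v).map g).prod := by
          simp only [List.map_append, List.map_cons, List.prod_append, List.prod_cons]
          rw [← mul_assoc, ha_comm.eq, mul_assoc]

theorem fst_ne_and_snd_ne_of_not_pairLE {n : ℕ} {e f : Fin n × Fin n} (hef : ¬ PairLE e f) (hfe : ¬ PairLE f e) :
    e.1 ≠ f.1 ∧ e.2 ≠ f.2 := by
  simp only [PairLE, not_and, not_le] at hef hfe
  constructor <;> intro h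
  · exact (hef h.symm.le).not_ge (hfe h.le).le
  · rcases le_total f.1 e.1 with h' | h'
    · exact (hef h').ne h.symm
    · exact (hfe h').ne h

theorem commute_tau {n : ℕ} {e f : Fin n × Fin n} (hef : ¬ PairLE e f) (hfe : ¬ PairLE f e) :
    Commute (tau e) (tau f) := by
  obtain ⟨hfst, hsnd⟩ := fst_ne_and_snd_ne_of_not_pairLE hef hfe
  have hfst := Fin.val_ne_of_ne hfst
  have hsnd := Fin.val_ne_of_ne hsnd
  refine (Equiv.Perm.disjoint_swap_swap ?_).commute
  simp only [List.nodup_cons, List.mem_cons, List.not_mem_nil, List.nodup_nil, Fin.ext_iff,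
    or_false, not_false_eq_true, and_true]
  -- the points `2a + 1` are odd and the points `2b` even, so only equal endpoints could collide
  omega

/-- `Π(G)` is well-defined: it does not depend on the chosen valid ordering of the edges. -/
theorem permOfList_well_defined {n : ℕ} (G : SimpleGraph (Fin n))
    (l₁ l₂ : List (Fin n × Fin n))
    (h₁ : ValidEdgeList G l₁) (h₂ : ValidEdgeList G l₂) :
    permOfList l₁ = permOfList l₂ := by
  obtain ⟨hnodup₁, hmem₁, hvalid₁⟩ := h₁
  obtain ⟨hnodup₂, hmem₂, hvalid₂⟩ := h₂
  have hperm : List.Perm l₁.reverse l₂.reverse :=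
    (List.reverse_perm l₁).trans <| ((List.perm_ext_iff_of_nodup hnodup₁ hnodup₂).mpr
      fun e => (hmem₁ e).trans (hmem₂ e).symm).trans (List.reverse_perm l₂).symm
  unfold permOfList
  rw [hperm.prod_map_eq_of_pairwise (fun _ _ hfe hef => commute_tau hef hfe)
    (List.pairwise_reverse.mpr hvalid₁) (List.pairwise_reverse.mpr hvalid₂)]
end

section
/- For every graph G on vertex set [n], the permutation Π(G) is a Dumont derangement of the second kind on [2n]; that is, Π(G)(2i-1) > 2i-1 for i ∈ [n-1], Π(G)(2n-1) ≥ 2n-1, and Π(G)(2i) < 2i for all i ∈ [n]. -/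
lemma List.prod_apply_of_eq_append {α : Type*} {L s t : List (Equiv.Perm α)} {σ : Equiv.Perm α}
    (hL : L = s ++ σ :: t) {x : α} (hs : ∀ τ ∈ s, τ (σ x) = σ x) (ht : ∀ τ ∈ t, τ x = x) :
    L.prod x = σ x := by
  have fix : ∀ (M : List (Equiv.Perm α)) (y : α), (∀ τ ∈ M, τ y = y) → M.prod y = y := by
    intro M y hM
    induction M with
    | nil => rfl
    | cons τ M ih => simp [hM τ (by simp), ih fun τ' h => hM τ' (by simp [h])]
  subst hL
  simp [Equiv.Perm.mul_apply, fix t x ht, fix s _ hs]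

lemma val_pi0_apply {n : ℕ} (x : Fin (2 * n)) :
    (pi0 n x).val = if x.val % 2 = 0 then x.val + 1 else x.val - 1 := by
  let σ (j : Fin n) : Equiv.Perm (Fin (2 * n)) :=
    Equiv.swap ⟨2 * j.val, by omega⟩ ⟨2 * j.val + 1, by omega⟩
  have val_σ (j : Fin n) (y : Fin (2 * n)) : (σ j y).val =
      if y.val = 2 * j.val then 2 * j.val + 1 else if y.val = 2 * j.val + 1 then 2 * j.val
      else y.val := by
    simp only [σ, Equiv.swap_apply_def]
    split_ifs <;> simp_all [Fin.ext_iff]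
  set k : Fin n := ⟨x.val / 2, by omega⟩
  have hσk : (σ k x).val = if x.val % 2 = 0 then x.val + 1 else x.val - 1 := by
    rw [val_σ]; simp only [k]; split_ifs <;> omega
  have fix (j : Fin n) (hj : j ≠ k) (y : Fin (2 * n)) (hy : y.val / 2 = x.val / 2) :
      σ j y = y := by
    have : j.val ≠ x.val / 2 := fun h => hj (Fin.ext h)
    ext; rw [val_σ]; split_ifs <;> omega
  obtain ⟨s, t, hst⟩ := List.append_of_mem (List.mem_finRange k)
  have hnd := List.nodup_finRange n
  rw [hst, List.nodup_append, List.nodup_cons] at hnd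
  have hnes : ∀ j ∈ s, j ≠ k := fun j hj hjk => hnd.2.2 j hj k List.mem_cons_self hjk
  have hnet : ∀ j ∈ t, j ≠ k := fun j hj hjk => hnd.2.1.1 (hjk ▸ hj)
  rw [pi0, List.ofFn_eq_map, hst, List.map_append, List.map_cons,
    List.prod_apply_of_eq_append rfl, hσk]
  · simp only [List.mem_map]
    rintro _ ⟨j, hj, rfl⟩
    exact fix j (hnes j hj) _ (by rw [hσk]; split_ifs <;> omega)
  · simp only [List.mem_map]
    rintro _ ⟨j, hj, rfl⟩
    exact fix j (hnet j hj) x rfl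

lemma val_tau_apply {n : ℕ} (e : Fin n × Fin n) (p : Fin (2 * n)) :
    (tau e p).val = if p.val = 2 * e.1.val + 1 then 2 * e.2.val
      else if p.val = 2 * e.2.val then 2 * e.1.val + 1 else p.val := by
  unfold tau
  rw [Equiv.swap_apply_def]
  split_ifs <;> simp_all [Fin.ext_iff]

lemma prod_map_tau_reverse_cons_apply {n : ℕ} (e : Fin n × Fin n) (l : List (Fin n × Fin n))
    (p : Fin (2 * n)) :
    ((e :: l).reverse.map tau).prod p = (l.reverse.map tau).prod (tau e p) := by
  simp [List.prod_append, Equiv.Perm.mul_apply]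

def edgeRev {n : ℕ} (e : Fin n × Fin n) : Fin n × Fin n :=
  (e.2.rev, e.1.rev)

lemma pairLE_edgeRev {n : ℕ} (e f : Fin n × Fin n) :
    PairLE (edgeRev e) (edgeRev f) ↔ PairLE e f := by
  simp [PairLE, edgeRev, and_comm]

lemma tau_edgeRev {n : ℕ} (e : Fin n × Fin n) :
    tau (edgeRev e) = Fin.revPerm * tau e * Fin.revPerm⁻¹ := by
  rw [tau, tau, ← Equiv.swap_apply_apply, Equiv.swap_comm]
  congr 1 <;> ext <;> simp [edgeRev] <;> omega

lemma conj_revPerm_pi0 (n : ℕ) : Fin.revPerm * pi0 n * Fin.revPerm⁻¹ = pi0 n := by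
  ext x
  have hx := x.isLt
  have h1 := val_pi0_apply x
  have h2 := val_pi0_apply x.rev
  simp only [Equiv.Perm.mul_apply, Equiv.Perm.inv_def, Fin.revPerm_symm, Fin.revPerm_apply,
    Fin.val_rev] at *
  split_ifs at h1 h2 <;> omega

lemma permOfList_map_edgeRev {n : ℕ} (l : List (Fin n × Fin n)) :
    permOfList (l.map edgeRev) = Fin.revPerm * permOfList l * Fin.revPerm⁻¹ := by
  have hcomp : tau ∘ edgeRev = (MulAut.conj Fin.revPerm : _ → Equiv.Perm (Fin (2 * n))) ∘ tau := by
    ext1 e; exact tau_edgeRev e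
  rw [permOfList, permOfList, List.map_reverse, List.map_map, hcomp, ← List.map_map,
    ← List.map_reverse, ← map_list_prod]
  nth_rw 1 [← conj_revPerm_pi0]
  simp [mul_assoc]

section ValidOrder

variable {n : ℕ} {l : List (Fin n × Fin n)}

lemma val_prod_map_tau_reverse_le (hlt : ∀ e ∈ l, e.1 < e.2)
    (hpw : l.Pairwise (fun e f => ¬ PairLE e f)) {i : ℕ} {p : Fin (2 * n)} (hp : p.val ≤ 2 * i)
    (hleft : ∀ e ∈ l, 2 * e.1.val + 1 = p.val → e.2.val ≤ i) :
    ((l.reverse.map tau).prod p).val ≤ 2 * i := by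
  induction l generalizing p with
  | nil => simpa using hp
  | cons e t ih =>
    rw [List.pairwise_cons] at hpw
    rw [prod_map_tau_reverse_cons_apply]
    have he : e.1.val < e.2.val := hlt e List.mem_cons_self
    have htau := val_tau_apply e p
    apply ih (fun f hf => hlt f (List.mem_cons_of_mem _ hf)) hpw.2
    · have := hleft e List.mem_cons_self
      split_ifs at htau <;> omega
    · intro f hf hfp
      have hf' := hleft f (List.mem_cons_of_mem _ hf)
      split_ifs at htau with h1 h2
      · omega
      · -- `f` starts where `e` does and comes later, so validity forces it to end earlier
        have hef : ¬ PairLE e f := hpw.1 f hf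
        have : f.1 = e.1 := Fin.ext (by omega)
        simp only [PairLE, this, le_refl, true_and, not_le] at hef
        have : f.2.val < e.2.val := hef
        omega
      · exact hf' (by omega)

lemma val_permOfList_lt_of_odd (hlt : ∀ e ∈ l, e.1 < e.2)
    (hpw : l.Pairwise (fun e f => ¬ PairLE e f)) {x : Fin (2 * n)} (hx : x.val % 2 = 1) :
    (permOfList l x).val < x.val := by
  have hpi := val_pi0_apply x
  rw [if_neg (by omega)] at hpi
  have := val_prod_map_tau_reverse_le hlt hpw (i := x.val / 2) (p := pi0 n x) (by omega)
    (fun _ _ _ => by omega)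
  rw [permOfList, Equiv.Perm.mul_apply]
  omega

lemma lt_val_permOfList_of_even (hlt : ∀ e ∈ l, e.1 < e.2)
    (hpw : l.Pairwise (fun e f => ¬ PairLE e f)) {x : Fin (2 * n)} (hx : x.val % 2 = 0) :
    x.val < (permOfList l x).val := by
  have hlt' : ∀ e ∈ l.map edgeRev, e.1 < e.2 := by
    simp only [List.mem_map]
    rintro _ ⟨e, he, rfl⟩
    exact Fin.rev_lt_rev.mpr (hlt e he)
  have hpw' : (l.map edgeRev).Pairwise (fun e f => ¬ PairLE e f) := by
    simpa [List.pairwise_map, pairLE_edgeRev] using hpw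
  have := val_permOfList_lt_of_odd hlt' hpw' (x := x.rev) (by simp [Fin.val_rev]; omega)
  simp only [permOfList_map_edgeRev, Equiv.Perm.mul_apply, Equiv.Perm.inv_def,
    Fin.revPerm_symm, Fin.revPerm_apply, Fin.rev_rev, Fin.val_rev] at this
  omega

end ValidOrder

/-- For every graph `G` on `[n]`, `Π(G)` is a Dumont derangement of the second kind. -/
theorem permOfList_isDumontDerangement {n : ℕ} (G : SimpleGraph (Fin n))
    (l : List (Fin n × Fin n)) (hl : ValidEdgeList G l) :
    IsDumontDerangement (permOfList l) := by
  obtain ⟨-, hedges, hpw⟩ := hl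
  have hlt : ∀ e ∈ l, e.1 < e.2 := fun e he => ((hedges e).mp he).1
  have heven (x : Fin (2 * n)) (hx : x.val % 2 = 0) := lt_val_permOfList_of_even hlt hpw hx
  exact ⟨fun x hx => (heven x hx).le, fun x hx => val_permOfList_lt_of_odd hlt hpw hx,
    fun x hx _ => heven x hx⟩
end

section
/- The permutation π_0 = (1,2)(3,4)⋯(2n-1,2n) is the unique Dumont derangement of the second kind on [2n] in which every pair (i, j) with 2 ≤ i < j ≤ 2n-1, i even and j odd, is in non-edge configuration. -/
theorem Set.InjOn.apply_eq_self_of_apply_le {α : Type*} [PartialOrder α] [WellFoundedLT α]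
    {s : Set α} {f : α → α} (hf : Set.InjOn f s) (hs : Set.MapsTo f s s)
    (hle : ∀ x ∈ s, f x ≤ x) {x : α} (hx : x ∈ s) : f x = x := by
  induction x using WellFoundedLT.induction with
  | _ x ih =>
    by_contra hne
    exact hne (hf (hs hx) hx (ih (f x) (lt_of_le_of_ne (hle x hx) hne) (hs hx)))

theorem prod_ofFn_swap_apply_val {m k : ℕ} (hk : 2 * k ≤ m) (x : Fin m) :
    ((List.ofFn fun i : Fin k =>
        Equiv.swap (⟨2 * i.val, by omega⟩ : Fin m) ⟨2 * i.val + 1, by omega⟩).prod x).val =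
      if x.val < 2 * k then (if x.val % 2 = 0 then x.val + 1 else x.val - 1) else x.val := by
  induction k generalizing x with
  | zero => simp
  | succ k ih =>
    rw [List.ofFn_succ', List.prod_concat, Equiv.Perm.mul_apply]
    simp only [Fin.val_castSucc, Fin.val_last]
    rw [ih (by omega), Equiv.swap_apply_def]
    split_ifs <;> simp_all [Fin.ext_iff] <;> omega

section Pi0

variable {n : ℕ}

theorem pi0_apply_val (x : Fin (2 * n)) :
    (pi0 n x).val = if x.val % 2 = 0 then x.val + 1 else x.val - 1 := by
  rw [pi0, prod_ofFn_swap_apply_val le_rfl, if_pos x.isLt]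

theorem pi0_apply_val_of_even {x : Fin (2 * n)} (hx : x.val % 2 = 0) :
    (pi0 n x).val = x.val + 1 := by
  rw [pi0_apply_val, if_pos hx]

theorem pi0_apply_val_of_odd {x : Fin (2 * n)} (hx : x.val % 2 = 1) :
    (pi0 n x).val = x.val - 1 := by
  rw [pi0_apply_val, if_neg (by omega)]

theorem pi0_involutive : Function.Involutive (pi0 n) := fun x => by
  ext
  rw [pi0_apply_val (pi0 n x), pi0_apply_val x]
  split_ifs <;> omega

theorem pi0_symm : (pi0 n).symm = pi0 n :=
  Equiv.ext fun x => Equiv.symm_apply_eq _ |>.2 (pi0_involutive x).symm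

theorem isDumontDerangement_pi0 : IsDumontDerangement (pi0 n) :=
  ⟨fun x hx => by rw [pi0_apply_val_of_even hx]; omega,
    fun x hx => by rw [pi0_apply_val_of_odd hx]; omega,
    fun x hx _ => by rw [pi0_apply_val_of_even hx]; omega⟩

theorem not_edgeConfig_pi0 {i j : Fin (2 * n)} (hi : i.val % 2 = 1) (hj : j.val % 2 = 0)
    (hij : i < j) : ¬ EdgeConfig (pi0 n) i j := by
  rw [EdgeConfig, pi0_symm, pi0_apply_val_of_odd hi, pi0_apply_val_of_even hj]
  omega

-- `π₀ ∘ ρ` maps the odd points injectively into themselves without increasing them.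
theorem apply_eq_pi0_of_odd {ρ : Equiv.Perm (Fin (2 * n))}
    (hρ : ∀ x : Fin (2 * n), x.val % 2 = 1 → (ρ x).val % 2 = 0 ∧ ρ x < x)
    {x : Fin (2 * n)} (hx : x.val % 2 = 1) : ρ x = pi0 n x := by
  have hfix : pi0 n (ρ x) = x := by
    refine ((pi0 n).injective.comp ρ.injective).injOn.apply_eq_self_of_apply_le
      (s := {x : Fin (2 * n) | x.val % 2 = 1}) (fun y hy => ?_) (fun y hy => ?_) hx
    · have := hρ y hy
      rw [Set.mem_ofPred, Function.comp_apply, pi0_apply_val_of_even this.1]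
      omega
    · have := hρ y hy
      rw [Fin.le_def, Function.comp_apply, pi0_apply_val_of_even this.1]
      rw [Fin.lt_def] at this
      omega
  exact pi0_involutive.eq_iff.1 hfix

end Pi0

section Dumont

variable {n : ℕ} {π : Equiv.Perm (Fin (2 * n))}

/- Were `x` odd, non-edge configuration of `(π x, x - 1)` would force the position `q` of the
value `x - 1` to be an even position after `x` or an odd one before `x`; but an even `q` has
`q ≤ π q = x - 1`, and an odd `q` has `x - 1 = π q < q`. -/
theorem IsDumontDerangement.even_of_apply_odd (hπ : IsDumontDerangement π)
    (hnon : ∀ i j : Fin (2 * n), i.val % 2 = 1 → j.val % 2 = 0 → i < j → ¬ EdgeConfig π i j)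
    {x : Fin (2 * n)} (hx : (π x).val % 2 = 1) : x.val % 2 = 0 := by
  by_contra hodd
  have hlt : (π x).val < x.val := hπ.2.1 x (by omega)
  obtain ⟨q, hq⟩ := π.surjective ⟨x.val - 1, by omega⟩
  have hqv : (π q).val = x.val - 1 := by rw [hq]
  have hqx : q ≠ x := by rintro rfl; omega
  have h := hnon (π x) (π q) hx (by omega) (by rw [Fin.lt_def]; omega)
  rw [EdgeConfig, Equiv.symm_apply_apply, Equiv.symm_apply_apply] at h
  have hqx' := Fin.val_ne_of_ne hqx
  rcases Nat.mod_two_eq_zero_or_one q.val with hq0 | hq1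
  · have := hπ.1 q hq0
    omega
  · have := hπ.2.1 q hq1
    omega

theorem IsDumontDerangement.eq_pi0 (hπ : IsDumontDerangement π)
    (hnon : ∀ i j : Fin (2 * n), i.val % 2 = 1 → j.val % 2 = 0 → i < j → ¬ EdgeConfig π i j) :
    π = pi0 n := by
  have hodd : ∀ x : Fin (2 * n), x.val % 2 = 1 → π x = pi0 n x :=
    fun x => apply_eq_pi0_of_odd fun y hy => by
      have heven : (π y).val % 2 = 0 := (Nat.mod_two_eq_zero_or_one _).resolve_right
        fun h => by have := hπ.even_of_apply_odd hnon h; omega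
      exact ⟨heven, hπ.2.1 y hy⟩
  have hsymm_odd : ∀ x : Fin (2 * n), x.val % 2 = 1 → π.symm x = pi0 n x :=
    fun x => apply_eq_pi0_of_odd fun y hy => by
      have heven : (π.symm y).val % 2 = 0 := hπ.even_of_apply_odd hnon (by simpa using hy)
      have := hπ.1 _ heven
      rw [Equiv.apply_symm_apply] at this
      exact ⟨heven, Fin.lt_def.2 (by omega)⟩
  refine Equiv.ext fun x => ?_
  rcases Nat.mod_two_eq_zero_or_one x.val with hx | hx
  · have hx' : (pi0 n x).val % 2 = 1 := by rw [pi0_apply_val_of_even hx]; omega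
    exact ((Equiv.symm_apply_eq π).1 ((hsymm_odd _ hx').trans (pi0_involutive x))).symm
  · rw [hodd x hx]

end Dumont

/-- `π₀` is the unique Dumont derangement of the second kind in which every pair
`(i,j)` with `i` even, `j` odd (1-based; 0-indexed: `i.val` odd, `j.val` even), `i < j`,
is in non-edge configuration. -/
theorem pi0_unique_nonEdgeConfig {n : ℕ} :
    (IsDumontDerangement (pi0 n) ∧
      ∀ i j : Fin (2 * n), i.val % 2 = 1 → j.val % 2 = 0 → i < j →
        ¬ EdgeConfig (pi0 n) i j) ∧
    (∀ π : Equiv.Perm (Fin (2 * n)), IsDumontDerangement π →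
      (∀ i j : Fin (2 * n), i.val % 2 = 1 → j.val % 2 = 0 → i < j → ¬ EdgeConfig π i j) →
      π = pi0 n) :=
  ⟨⟨isDumontDerangement_pi0, fun _ _ => not_edgeConfig_pi0⟩, fun _ hπ hnon => hπ.eq_pi0 hnon⟩
end

section
/- Let G be a terrain-like graph on [n] and 1 ≤ x < y ≤ n. If no edge {u,v} of G satisfies {u,v} ⪯ {x,y}, then the pair (2x, 2y-1) is in non-edge configuration in Π(G). -/
/-!
Since `Π(G)⁻¹ = π₀ τ(e₁) ⋯ τ(e_m)`, the value `Π(G)⁻¹(i)` is found by following a token from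
position `i` through `τ(e_m)`, …, `τ(e₁)`, i.e. through the edges in increasing valid order.
A token on the slot `2a` is moved only by edges `{a, t}`, one on `2b - 1` only by edges `{s, b}`,
and a valid order extends `⪯`; so, whatever valid order is used, the token started at `2x` walks
`x = a₀ → b₁ → a₁ → b₂ → ⋯` along the nearest unused edge further out (`b_{j+1}` the least
neighbour of `a_j` above `b_j`, `a_{j+1}` the largest neighbour of `b_{j+1}` below `a_j`), and the
token started at `2y - 1` walks `y = b'₀ → a'₁ → b'₁ → ⋯` in the same way.

Because no edge lies `⪯`-below `{x, y}`, `a'₁ < a₀ < b'₀ < b₁`, and the X-property applied to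
`{a'₁, y}` and `{x, b₁}` gives the edge `{a'₁, b₁}`. Inductively `a'_j < a_{j-1} < b'_{j-1} < b_j`
and `{a'_j, b_j}` is an edge, so neither walk can stop at that stage. Hence the first walk can
only stop on a slot `2a` and the second only on a slot `2b - 1`, after which the other one moves
only further out; comparing the end points under `π₀⁻¹` gives the non-edge configuration.
-/

open Equiv Relation

theorem List.prod_ofFn_apply_of_forall_ne {α : Type*} {m : ℕ} (f : Fin m → Equiv.Perm α)
    (k : Fin m) (z : α) (hz : ∀ i ≠ k, f i z = z) (hkz : ∀ i ≠ k, f i (f k z) = f k z) :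
    (List.ofFn f).prod z = f k z := by
  induction m with
  | zero => exact k.elim0
  | succ m ih =>
    rw [List.ofFn_succ, List.prod_cons, Equiv.Perm.mul_apply]
    rcases Fin.eq_zero_or_eq_succ k with rfl | ⟨k, rfl⟩
    · have : (List.ofFn fun i => f i.succ).prod ∈ MulAction.stabilizer (Equiv.Perm α) z :=
        Subgroup.list_prod_mem _ fun g hg => by
          obtain ⟨i, rfl⟩ := List.mem_ofFn.1 hg
          exact hz _ (Fin.succ_ne_zero i)
      exact congrArg (f 0) (MulAction.mem_stabilizer_iff.1 this)
    · rw [ih (fun i => f i.succ) k (fun i hi => hz _ (by simpa using hi))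
        (fun i hi => hkz _ (by simpa using hi))]
      exact hkz 0 (Fin.succ_ne_zero k).symm

section Slots

variable {n : ℕ}

/-- The paper's position `2a`, with both `[n]` and `[2n]` numbered from `0`. -/
def leftSlot (a : Fin n) : Fin (2 * n) := ⟨2 * a.val + 1, by omega⟩

/-- The paper's position `2b - 1`, with both `[n]` and `[2n]` numbered from `0`. -/
def rightSlot (b : Fin n) : Fin (2 * n) := ⟨2 * b.val, by omega⟩

theorem tau_eq_swap (e : Fin n × Fin n) : tau e = swap (leftSlot e.1) (rightSlot e.2) := rfl

theorem leftSlot_inj {a b : Fin n} : leftSlot a = leftSlot b ↔ a = b := by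
  simp [leftSlot, Fin.ext_iff]

theorem rightSlot_inj {a b : Fin n} : rightSlot a = rightSlot b ↔ a = b := by
  simp [rightSlot, Fin.ext_iff]

theorem leftSlot_ne_rightSlot (a b : Fin n) : leftSlot a ≠ rightSlot b := by
  simp only [leftSlot, rightSlot, ne_eq, Fin.ext_iff]
  omega

theorem pi0_apply (k : Fin n) (z : Fin (2 * n)) (hz : z.val / 2 = k.val) :
    pi0 n z = swap ⟨2 * k.val, by omega⟩ ⟨2 * k.val + 1, by omega⟩ z := by
  have hfix : ∀ i : Fin n, i ≠ k → ∀ w : Fin (2 * n), w.val / 2 = k.val →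
      swap (⟨2 * i.val, by omega⟩ : Fin (2 * n)) ⟨2 * i.val + 1, by omega⟩ w = w := by
    intro i hi w hw
    have : i.val ≠ k.val := Fin.val_ne_of_ne hi
    apply swap_apply_of_ne_of_ne <;> simp only [ne_eq, Fin.ext_iff] <;> omega
  refine List.prod_ofFn_apply_of_forall_ne _ k z (fun i hi => hfix i hi z hz)
    (fun i hi => hfix i hi _ ?_)
  rcases eq_or_ne z ⟨2 * k.val, by omega⟩ with h₁ | h₁
  · simp only [h₁, swap_apply_left]
    omega
  rcases eq_or_ne z ⟨2 * k.val + 1, by omega⟩ with h₂ | h₂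
  · simp only [h₂, swap_apply_right]
    omega
  rwa [swap_apply_of_ne_of_ne h₁ h₂]

theorem pi0_leftSlot (a : Fin n) : pi0 n (leftSlot a) = rightSlot a := by
  rw [pi0_apply a _ (by simp [leftSlot]; omega)]
  exact swap_apply_right _ _

theorem pi0_rightSlot (b : Fin n) : pi0 n (rightSlot b) = leftSlot b := by
  rw [pi0_apply b _ (by simp [rightSlot])]
  exact swap_apply_left _ _

theorem permOfList_symm_apply (l : List (Fin n × Fin n)) (z : Fin (2 * n)) :
    (permOfList l).symm z = (pi0 n).symm ((l.map tau).prod z) := by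
  have : ((l.reverse.map tau).prod)⁻¹ = (l.map tau).prod := by
    simp only [List.prod_inv_reverse, List.map_reverse, List.map_map, List.reverse_reverse,
      Function.comp_def, tau_eq_swap, swap_inv]
    rfl
  rw [permOfList, ← Perm.inv_def, mul_inv_rev, this]
  rfl

end Slots

/-- A token sitting on `leftSlot a` or `rightSlot b` while the transpositions `τ(e)` act on it.
The second field is the endpoint of the edge that brought it there (initially the vertex
itself): from `left a lo` it can still be moved by the edges `{a, t}` with `t > lo`, from
`right b hi` by the edges `{s, b}` with `s < hi`. -/
inductive Walker (n : ℕ)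
  | left (a lo : Fin n)
  | right (b hi : Fin n)

namespace Walker

variable {n : ℕ}

def slot : Walker n → Fin (2 * n)
  | left a _ => leftSlot a
  | right b _ => rightSlot b

def lower : Walker n → Fin n
  | left a _ => a
  | right _ hi => hi

def upper : Walker n → Fin n
  | left _ lo => lo
  | right b _ => b

def Touches : Walker n → Fin n × Fin n → Prop
  | left a _, e => e.1 = a
  | right b _, e => e.2 = b

def Admits : Walker n → Fin n × Fin n → Prop
  | left a lo, e => e.1 = a ∧ lo < e.2
  | right b hi, e => e.2 = b ∧ e.1 < hi

def advance : Walker n → Fin n × Fin n → Walker n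
  | left _ _, e => right e.2 e.1
  | right _ _, e => left e.1 e.2

def rank : Walker n → ℕ
  | left a _ => 2 * a.val
  | right b _ => 2 * b.val + 1

theorem val_pi0_symm_slot (s : Walker n) : ((pi0 n).symm s.slot).val = s.rank := by
  cases s with
  | left a lo =>
    show ((pi0 n).symm (leftSlot a)).val = 2 * a.val
    rw [(pi0 n).symm_apply_eq.2 (pi0_rightSlot a).symm]
    rfl
  | right b hi =>
    show ((pi0 n).symm (rightSlot b)).val = 2 * b.val + 1
    rw [(pi0 n).symm_apply_eq.2 (pi0_leftSlot b).symm]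
    rfl

theorem touches_of_admits {s : Walker n} {e : Fin n × Fin n} (h : s.Admits e) : s.Touches e := by
  cases s <;> exact h.1

theorem tau_slot_of_touches {s : Walker n} {e : Fin n × Fin n} (h : s.Touches e) :
    tau e s.slot = (s.advance e).slot := by
  cases s <;> cases h
  · exact swap_apply_left _ _
  · exact swap_apply_right _ _

theorem tau_slot_of_not_touches {s : Walker n} {e : Fin n × Fin n} (h : ¬ s.Touches e) :
    tau e s.slot = s.slot := by
  cases s with
  | left a lo =>
    exact swap_apply_of_ne_of_ne (mt leftSlot_inj.1 (Ne.symm h)) (leftSlot_ne_rightSlot _ _)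
  | right b hi =>
    exact swap_apply_of_ne_of_ne (leftSlot_ne_rightSlot _ _).symm (mt rightSlot_inj.1 (Ne.symm h))

theorem pairLE_of_admits_advance {s : Walker n} {e f : Fin n × Fin n}
    (h : (s.advance e).Admits f) : PairLE e f := by
  cases s <;> obtain ⟨h₁, h₂⟩ := h
  · exact ⟨h₂.le, h₁.ge⟩
  · exact ⟨h₁.le, h₂.le⟩

theorem not_admits_advance_self (s : Walker n) (e : Fin n × Fin n) : ¬ (s.advance e).Admits e := by
  cases s <;> rintro ⟨-, h⟩ <;> exact lt_irrefl _ h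

theorem lt_of_admits_advance {s : Walker n} {e f : Fin n × Fin n} (he : e.1 < e.2)
    (h : (s.advance e).Admits f) : f.1 < f.2 := by
  cases s <;> obtain ⟨h₁, h₂⟩ := h
  · exact h₁ ▸ h₂.trans he
  · exact h₁ ▸ he.trans h₂

theorem admits_advance_of_touches {s : Walker n} {e f : Fin n × Fin n}
    (h : (s.advance e).Touches f) (hfe : ¬ PairLE f e) : (s.advance e).Admits f := by
  cases s
  · exact ⟨h, lt_of_not_ge fun h' => hfe ⟨h', h.le⟩⟩
  · exact ⟨h, lt_of_not_ge fun h' => hfe ⟨h.ge, h'⟩⟩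

/-- One move of a walker: the edge it takes next is the `⪯`-least one it admits. -/
inductive Step (G : SimpleGraph (Fin n)) : Walker n → Walker n → Prop
  | up {a lo b : Fin n} : lo < b → G.Adj a b → (∀ t, lo < t → G.Adj a t → b ≤ t) →
      Step G (left a lo) (right b a)
  | down {b hi a : Fin n} : a < hi → G.Adj a b → (∀ s, s < hi → G.Adj s b → s ≤ a) →
      Step G (right b hi) (left a b)

variable {G : SimpleGraph (Fin n)}

def IsTerminal (G : SimpleGraph (Fin n)) (s : Walker n) : Prop :=
  ∀ e, s.Admits e → ¬ G.Adj e.1 e.2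

theorem step_advance {s : Walker n} {e : Fin n × Fin n} (hadm : s.Admits e)
    (hadj : G.Adj e.1 e.2) (hmin : ∀ f, s.Admits f → G.Adj f.1 f.2 → PairLE f e → f = e) :
    Step G s (s.advance e) := by
  obtain ⟨u, v⟩ := e
  cases s with
  | left a lo =>
    obtain ⟨rfl, hlt⟩ := hadm
    refine Step.up hlt hadj fun t ht hat => le_of_not_gt fun htv => htv.ne ?_
    exact congrArg Prod.snd (hmin (u, t) ⟨rfl, ht⟩ hat ⟨le_rfl, htv.le⟩)
  | right b hi =>
    obtain ⟨rfl, hlt⟩ := hadm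
    refine Step.down hlt hadj fun s hs hsv => le_of_not_gt fun hus => hus.ne' ?_
    exact congrArg Prod.fst (hmin (s, v) ⟨rfl, hs⟩ hsv ⟨hus.le, le_rfl⟩)

theorem Step.lower_le_upper_le {s s' : Walker n} (h : Step G s s') :
    s'.lower ≤ s.lower ∧ s.upper ≤ s'.upper := by
  cases h with
  | up hlt => exact ⟨le_rfl, hlt.le⟩
  | down hlt => exact ⟨hlt.le, le_rfl⟩

theorem lower_le_upper_le_of_reflTransGen {s s' : Walker n} (h : ReflTransGen (Step G) s s') :
    s'.lower ≤ s.lower ∧ s.upper ≤ s'.upper := by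
  induction h with
  | refl => exact ⟨le_rfl, le_rfl⟩
  | tail _ hstep ih =>
    have := hstep.lower_le_upper_le
    exact ⟨this.1.trans ih.1, ih.2.trans this.2⟩

def Tracks (G : SimpleGraph (Fin n)) (rem : List (Fin n × Fin n)) (s : Walker n) : Prop :=
  (∀ e, s.Admits e → G.Adj e.1 e.2 → e ∈ rem) ∧ (∀ e ∈ rem, s.Touches e → s.Admits e)

section Tracks

variable {r done : List (Fin n × Fin n)} {e : Fin n × Fin n} {s : Walker n}

theorem Tracks.of_not_touches (hs : s.Tracks G (r ++ [e])) (h : ¬ s.Touches e) : s.Tracks G r := by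
  refine ⟨fun f hf hadj => ?_, fun f hf => hs.2 f (List.mem_append_left _ hf)⟩
  rcases List.mem_append.1 (hs.1 f hf hadj) with hr | he
  · exact hr
  · exact absurd (List.mem_singleton.1 he ▸ touches_of_admits hf) h

theorem Tracks.step (hs : s.Tracks G (r ++ [e]))
    (hpw : (r ++ e :: done).Pairwise fun e f => ¬ PairLE e f) (h : s.Touches e)
    (hadj : G.Adj e.1 e.2) : Step G s (s.advance e) := by
  refine step_advance (hs.2 e (by simp) h) hadj fun f hf hfadj hfe => ?_
  rcases List.mem_append.1 (hs.1 f hf hfadj) with hr | he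
  · exact absurd hfe ((List.pairwise_append.1 hpw).2.2 f hr e (by simp))
  · exact List.mem_singleton.1 he

theorem tracks_advance (hpw : (r ++ e :: done).Pairwise fun e f => ¬ PairLE e f)
    (hmem : ∀ f, f ∈ r ++ e :: done ↔ f.1 < f.2 ∧ G.Adj f.1 f.2) :
    (s.advance e).Tracks G r := by
  obtain ⟨hr, hedone, hre⟩ := List.pairwise_append.1 hpw
  have hlt : e.1 < e.2 := ((hmem e).1 (by simp)).1
  refine ⟨fun f hf hadj => ?_, fun f hf h => admits_advance_of_touches h (hre f hf e (by simp))⟩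
  rcases List.mem_append.1 ((hmem f).2 ⟨lt_of_admits_advance hlt hf, hadj⟩) with hfr | hf'
  · exact hfr
  rcases List.mem_cons.1 hf' with rfl | hfd
  · exact absurd hf (not_admits_advance_self s f)
  · exact absurd (pairLE_of_admits_advance hf) ((List.pairwise_cons.1 hedone).1 f hfd)

theorem exists_walk_of_tracks (rem done : List (Fin n × Fin n))
    (hpw : (rem ++ done).Pairwise fun e f => ¬ PairLE e f)
    (hmem : ∀ f, f ∈ rem ++ done ↔ f.1 < f.2 ∧ G.Adj f.1 f.2) (s : Walker n)
    (hs : s.Tracks G rem) :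
    ∃ s', ReflTransGen (Step G) s s' ∧ s'.IsTerminal G ∧ (rem.map tau).prod s.slot = s'.slot := by
  induction rem using List.reverseRecOn generalizing done s with
  | nil => exact ⟨s, .refl, fun e he hadj => List.not_mem_nil (hs.1 e he hadj), rfl⟩
  | append_singleton r e ih =>
    rw [List.append_assoc, List.singleton_append] at hpw hmem
    rw [List.map_append, List.prod_append, List.map_singleton, List.prod_singleton,
      Perm.mul_apply]
    by_cases h : s.Touches e
    · have hstep := hs.step hpw h ((hmem e).1 (by simp)).2
      obtain ⟨s', hwalk, hterm, hslot⟩ := ih (e :: done) hpw hmem _ (tracks_advance hpw hmem)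
      exact ⟨s', hwalk.head hstep, hterm, by rwa [tau_slot_of_touches h]⟩
    · obtain ⟨s', hwalk, hterm, hslot⟩ := ih (e :: done) hpw hmem s (hs.of_not_touches h)
      exact ⟨s', hwalk, hterm, by rwa [tau_slot_of_not_touches h]⟩

end Tracks

theorem tracks_of_lower_eq_upper {l : List (Fin n × Fin n)}
    (hl : ∀ f, f ∈ l ↔ f.1 < f.2 ∧ G.Adj f.1 f.2) {s : Walker n} (hs : s.lower = s.upper) :
    s.Tracks G l := by
  cases s with
  | left a lo =>
    cases (hs : a = lo)
    exact ⟨fun f hf hadj => (hl f).2 ⟨hf.1 ▸ hf.2, hadj⟩,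
      fun f hf h => ⟨h, h ▸ ((hl f).1 hf).1⟩⟩
  | right b hi =>
    cases (hs : hi = b)
    exact ⟨fun f hf hadj => (hl f).2 ⟨hf.1 ▸ hf.2, hadj⟩,
      fun f hf h => ⟨h, h ▸ ((hl f).1 hf).1⟩⟩

def NonEdgeConfig (s s' : Walker n) : Prop :=
  ¬ (s.rank < s'.rank ↔ s.rank % 2 = s'.rank % 2)

theorem nonEdgeConfig_left_right {a b : Fin n} (h : a < b) (lo hi : Fin n) :
    NonEdgeConfig (left a lo) (right b hi) := by
  simp only [NonEdgeConfig, rank, Fin.lt_def] at *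
  omega

theorem nonEdgeConfig_left_of_lt {a : Fin n} {s : Walker n} (h₁ : s.lower < a) (h₂ : a < s.upper)
    (lo : Fin n) : NonEdgeConfig (left a lo) s := by
  cases s <;> simp only [NonEdgeConfig, rank, lower, upper, Fin.lt_def] at * <;> omega

theorem nonEdgeConfig_right_of_lt {b : Fin n} {s : Walker n} (h₁ : s.lower < b) (h₂ : b < s.upper)
    (hi : Fin n) : NonEdgeConfig s (right b hi) := by
  cases s <;> simp only [NonEdgeConfig, rank, lower, upper, Fin.lt_def] at * <;> omega

/-- Relative position of the walkers started at `left x x` and `right y y` after the same number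
of moves of each; the X-property carries it from one move to the next. -/
def Coupled (G : SimpleGraph (Fin n)) : Walker n → Walker n → Prop
  | left a b, right b' a' =>
      a < b' ∧ (∀ t, b < t → G.Adj a t → b' < t) ∧ (∀ s, s < a' → G.Adj s b' → s < a)
  | right b c, left a' e => a' < c ∧ c < e ∧ e < b ∧ G.Adj a' b
  | _, _ => False

theorem nonEdgeConfig_of_coupled (hG : TerrainLike G) {sv sw sv' sw' : Walker n}
    (hv : ReflTransGen (Step G) sv sv') (hv' : sv'.IsTerminal G)
    (hw : ReflTransGen (Step G) sw sw') (hw' : sw'.IsTerminal G) (hc : Coupled G sv sw) :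
    NonEdgeConfig sv' sw' := by
  induction hv using Relation.ReflTransGen.head_induction_on generalizing sw with
  | refl =>
    cases sv' <;> cases sw
    case left.right a b b' a' =>
      rcases hw.cases_head with rfl | ⟨_, hwstep, hrest⟩
      · exact nonEdgeConfig_left_right hc.1 b a'
      cases hwstep with
      | @down _ _ a₂ ha₂ hadj _ =>
        have hmono := lower_le_upper_le_of_reflTransGen hrest
        exact nonEdgeConfig_left_of_lt (hmono.1.trans_lt (hc.2.2 a₂ ha₂ hadj))
          (hc.1.trans_le hmono.2) b
    case right.left b c a' e => exact absurd hc.2.2.2 (hv' (a', b) ⟨rfl, hc.1⟩)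
    all_goals exact hc.elim
  | head hstep hrest ih =>
    cases hstep <;> cases sw
    case up.right a lo b hlt hadj _ b' a' =>
      have hb' : b' < b := hc.2.1 b hlt hadj
      rcases hw.cases_head with rfl | ⟨_, hwstep, hwrest⟩
      · have hmono := lower_le_upper_le_of_reflTransGen hrest
        exact nonEdgeConfig_right_of_lt (hmono.1.trans_lt hc.1) (hb'.trans_le hmono.2) a'
      cases hwstep with
      | @down _ _ a₂ ha₂ hadj₂ _ =>
        have ha₂a : a₂ < a := hc.2.2 a₂ ha₂ hadj₂
        exact ih hwrest ⟨ha₂a, hc.1, hb', hG a₂ a b' b ha₂a hc.1 hb' hadj₂ hadj⟩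
    case down.left b c a hlt hadj hmax a' e =>
      obtain ⟨ha'c, hce, heb, hadj'⟩ := hc
      rcases hw.cases_head with rfl | ⟨_, hwstep, hwrest⟩
      · exact absurd hadj' (hw' (a', b) ⟨rfl, heb⟩)
      cases hwstep with
      | @up _ _ b' he _ hmin =>
        exact ih hwrest ⟨hlt.trans (hce.trans he),
          fun t hbt _ => (hmin b heb hadj').trans_lt hbt,
          fun s hs _ => hs.trans_le (hmax a' ha'c hadj')⟩
    all_goals exact hc.elim

end Walker

open Walker

/-- If no edge of the terrain-like graph `G` is `⪯`-below `{x,y}`, then `(2x, 2y-1)` is in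
non-edge configuration in `Π(G)`. -/
theorem nonEdgeConfig_of_no_edge_below {n : ℕ} (G : SimpleGraph (Fin n))
    (hG : TerrainLike G) (x y : Fin n) (hxy : x < y)
    (h : ∀ u v : Fin n, u < v → G.Adj u v → ¬ PairLE (u, v) (x, y)) :
    ∀ l : List (Fin n × Fin n), ValidEdgeList G l →
      ¬ EdgeConfig (permOfList l) ⟨2 * x.val + 1, by have := x.isLt; omega⟩
        ⟨2 * y.val, by have := y.isLt; omega⟩ := by
  rintro l ⟨-, hmem, hpw⟩
  have hmem' : ∀ f, f ∈ l ++ [] ↔ f.1 < f.2 ∧ G.Adj f.1 f.2 := by simpa using hmem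
  rw [← List.append_nil l] at hpw
  obtain ⟨sv, hv, hv', hsv⟩ := exists_walk_of_tracks l [] hpw hmem' (left x x)
    (tracks_of_lower_eq_upper hmem rfl)
  obtain ⟨sw, hw, hw', hsw⟩ := exists_walk_of_tracks l [] hpw hmem' (right y y)
    (tracks_of_lower_eq_upper hmem rfl)
  have hc : Coupled G (left x x) (right y y) :=
    ⟨hxy, fun t hxt hadj => lt_of_not_ge fun hty => h x t hxt hadj ⟨le_rfl, hty⟩,
      fun s hsy hadj => lt_of_not_ge fun hxs => h s y hsy hadj ⟨hxs, le_rfl⟩⟩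
  have hsep := nonEdgeConfig_of_coupled hG hv hv' hw hw' hc
  show ¬ EdgeConfig (permOfList l) (left x x).slot (right y y).slot
  rwa [EdgeConfig, permOfList_symm_apply, permOfList_symm_apply, hsv, hsw, val_pi0_symm_slot,
    val_pi0_symm_slot]
end

section
/- The number of terrain-like graphs on vertex set [n] is divisible by 2^{n-1}. -/
/-!
A terrain-like graph is constrained only through pairs of vertices at distance at least two, so
adding or deleting edges of the path `0 - 1 - ⋯ - (n-1)` preserves the property. Splitting
`G` into `(G \ P, G ⊓ P)`, where `P` is the path graph, identifies the terrain-like graphs with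
pairs (terrain-like graph edge-disjoint from `P`, spanning subgraph of `P`), and `P` has
`2 ^ (n - 1)` spanning subgraphs.
-/

section GeneralizedBooleanAlgebra

variable {α : Type*} [GeneralizedBooleanAlgebra α]

def equivDisjointProdIic (k : α) : α ≃ {y : α // Disjoint y k} × Set.Iic k where
  toFun x := (⟨x \ k, disjoint_sdiff_self_left⟩, ⟨x ⊓ k, inf_le_right⟩)
  invFun p := p.1.1 ⊔ p.2.1
  left_inv x := (sup_comm _ _).trans (sup_inf_sdiff x k)
  right_inv := by
    rintro ⟨⟨y, hy⟩, ⟨z, hz : z ≤ k⟩⟩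
    refine Prod.ext (Subtype.ext ?_) (Subtype.ext ?_)
    · change (y ⊔ z) \ k = y
      rw [sup_sdiff, hy.sdiff_eq_left, sdiff_eq_bot_iff.2 hz, sup_bot_eq]
    · change (y ⊔ z) ⊓ k = z
      rw [inf_sup_right, hy.eq_bot, bot_sup_eq, inf_eq_left.2 hz]

theorem card_Iic_dvd_card_subtype {P : α → Prop} (k : α) (hP : ∀ x, P (x \ k) ↔ P x) :
    Nat.card (Set.Iic k) ∣ Nat.card {x // P x} := by
  let e : {x // P x} ≃ {y : {y : α // Disjoint y k} // P y} × Set.Iic k :=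
    ((equivDisjointProdIic k).subtypeEquiv fun x => (hP x).symm).trans
      Equiv.prodSubtypeFstEquivSubtypeProd
  rw [Nat.card_congr e, Nat.card_prod]
  exact dvd_mul_left _ _

end GeneralizedBooleanAlgebra

namespace SimpleGraph

def iicEquivSetEdgeSet {V : Type*} (G : SimpleGraph V) : Set.Iic G ≃ Set G.edgeSet :=
  .trans (β := 𝒫 G.edgeSet)
    { toFun H := ⟨H.1.edgeSet, edgeSet_subset_edgeSet.2 H.2⟩
      invFun s := ⟨fromEdgeSet s.1, (fromEdgeSet_le G).2 fun _ he => s.2 he.1⟩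
      left_inv _ := Subtype.ext (fromEdgeSet_edgeSet _)
      right_inv s := Subtype.ext <| (edgeSet_fromEdgeSet _).trans <| sdiff_eq_left.2 <|
        Set.subset_compl_iff_disjoint_right.1 (s.2.trans G.edgeSet_subset_compl_diagSet) }
    (Equiv.Set.powerset G.edgeSet)

theorem card_Iic {V : Type*} [Finite V] (G : SimpleGraph V) :
    Nat.card (Set.Iic G) = 2 ^ Nat.card G.edgeSet := by
  have := Fintype.ofFinite G.edgeSet
  rw [Nat.card_congr G.iicEquivSetEdgeSet, Nat.card_eq_fintype_card, Fintype.card_set,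
    Nat.card_eq_fintype_card]

theorem edgeSet_pathGraph_succ (m : ℕ) :
    (pathGraph (m + 1)).edgeSet = Set.range fun i : Fin m => s(i.castSucc, i.succ) := by
  ext e
  induction e using Sym2.ind with
  | _ a b =>
    simp only [mem_edgeSet, pathGraph_adj, Set.mem_range, Sym2.eq_iff, Fin.ext_iff,
      Fin.val_castSucc, Fin.val_succ]
    constructor
    · rintro (h | h)
      · exact ⟨⟨a, by omega⟩, Or.inl ⟨rfl, h⟩⟩
      · exact ⟨⟨b, by omega⟩, Or.inr ⟨rfl, h⟩⟩
    · rintro ⟨i, h | h⟩ <;> omega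

theorem card_edgeSet_pathGraph (n : ℕ) : Nat.card (pathGraph n).edgeSet = n - 1 := by
  cases n with
  | zero => simp
  | succ m =>
    have hinj : Function.Injective fun i : Fin m => s(i.castSucc, i.succ) := by
      intro i j h
      simp only [Sym2.eq_iff, Fin.ext_iff, Fin.val_castSucc, Fin.val_succ] at h
      omega
    rw [edgeSet_pathGraph_succ, Nat.card_range_of_injective hinj, Nat.card_fin,
      Nat.add_sub_cancel]

end SimpleGraph

theorem terrainLike_congr {n : ℕ} {G H : SimpleGraph (Fin n)}
    (h : ∀ a c : Fin n, a.val + 1 < c.val → (G.Adj a c ↔ H.Adj a c)) :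
    TerrainLike G ↔ TerrainLike H := by
  have transfer : ∀ {G H : SimpleGraph (Fin n)},
      (∀ a c : Fin n, a.val + 1 < c.val → (G.Adj a c ↔ H.Adj a c)) →
      TerrainLike G → TerrainLike H := by
    intro G H h hG a b c d hab hbc hcd hac hbd
    have := Fin.lt_def.1 hab
    have := Fin.lt_def.1 hbc
    have := Fin.lt_def.1 hcd
    exact (h a d (by omega)).1 <|
      hG a b c d hab hbc hcd ((h a c (by omega)).2 hac) ((h b d (by omega)).2 hbd)
  exact ⟨transfer h, transfer fun a c hac => (h a c hac).symm⟩

theorem terrainLike_sdiff_pathGraph {n : ℕ} (G : SimpleGraph (Fin n)) :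
    TerrainLike (G \ SimpleGraph.pathGraph n) ↔ TerrainLike G :=
  terrainLike_congr fun a c hac => by
    rw [SimpleGraph.sdiff_adj, SimpleGraph.pathGraph_adj, and_iff_left (by omega)]

theorem two_pow_dvd_card_terrainLike_general (n : ℕ) :
    2 ^ (n - 1) ∣ Nat.card {G : SimpleGraph (Fin n) // TerrainLike G} := by
  rw [← SimpleGraph.card_edgeSet_pathGraph, ← SimpleGraph.card_Iic]
  exact card_Iic_dvd_card_subtype _ terrainLike_sdiff_pathGraph

/-- The number of terrain-like graphs on `[n]` is divisible by `2^(n-1)`. -/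
theorem two_pow_dvd_card_terrainLike (n : ℕ) (hn : 1 ≤ n) :
    2 ^ (n - 1) ∣ Nat.card {G : SimpleGraph (Fin n) // TerrainLike G} :=
  two_pow_dvd_card_terrainLike_general n
end
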